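/- (BSC-bound for H_α^J.) Fix α > 0, α ≠ 1, and suppose that for every fixed y ∈ I_α^H the map x ↦ κ_α^H(x,y) is convex on I_α^H, and likewise in the second argument for every fixed first argument. Then: if α > 1, H_α^J(X_1+X_2|Y_1Y_2) ≤ h_α( h_α^{-1}(H_α^J(X_1|Y_1)) ∗ h_α^{-1}(H_α^J(X_2|Y_2)) ); and if α < 1, H_α^J(X_1+X_2|Y_1Y_2) ≥ h_α( h_α^{-1}(H_α^J(X_1|Y_1)) ∗ h_α^{-1}(H_α^J(X_2|Y_2)) ). If instead κ_α^H is concave in each argument, the two inequalities hold with ≤ and ≥ exchanged. -/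

import Mathlib

/-!
Write `K = exp((1-α) H_α^J(X|Y))`. Splitting `∑ p(x,y)^α` along `y` shows that `K` is the
average of `k_α^H(P(X=0|Y=y))` under the escort weights `p(y)^α / ∑ p(y')^α`. For the
independent pair the escort weights multiply, and given `(y₁,y₂)` the law of `X₁+X₂` is the
binary convolution of the two conditional laws, so `K(X₁+X₂|Y₁Y₂)` is the double escort average
of `κ_α^H(k₁(y₁), k₂(y₂))`. Jensen's inequality in each argument of `κ_α^H` compares it with
`κ_α^H(K₁, K₂) = exp((1-α) h_α(h_α⁻¹(H₁) ∗ h_α⁻¹(H₂)))`; taking logarithms, the sign of `1-α`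
decides the direction.
-/

open Real

noncomputable section

/-- Binary convolution `a∗b = a(1-b) + (1-a)b`. -/
def bconv (a b : ℝ) : ℝ := a * (1 - b) + (1 - a) * b

/-- Binary Rényi entropy `h_α(p) = (1/(1-α))·log(p^α + (1-p)^α)`. -/
def binH (α p : ℝ) : ℝ := (1 / (1 - α)) * Real.log (p ^ α + (1 - p) ^ α)

/-- Inverse of `h_α` as a map `[0, log 2] → [0, 1/2]`. -/
def binHInv (α : ℝ) : ℝ → ℝ := Function.invFunOn (binH α) (Set.Icc 0 (1/2))

/-- `k_α^A(p) = (p^α + (1-p)^α)^{1/α}`. -/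
def kA (α p : ℝ) : ℝ := (p ^ α + (1 - p) ^ α) ^ (1/α)

/-- Inverse of `k_α^A`, mapping `I_α^A` back to `[0,1/2]`. -/
def kAInv (α : ℝ) : ℝ → ℝ := Function.invFunOn (kA α) (Set.Icc 0 (1/2))

/-- `δ_α^A = 2^{(1-α)/α}`. -/
def deltaA (α : ℝ) : ℝ := (2 : ℝ) ^ ((1 - α)/α)

/-- The closed interval `I_α^A` with endpoints `1` and `δ_α^A`. -/
def IA (α : ℝ) : Set ℝ := Set.uIcc 1 (deltaA α)

/-- `κ_α^A(x,y) = k_α^A((k_α^A)⁻¹(x) ∗ (k_α^A)⁻¹(y))`. -/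
def kkA (α x y : ℝ) : ℝ := kA α (bconv (kAInv α x) (kAInv α y))

/-- `k_α^H(p) = p^α + (1-p)^α`. -/
def kH (α p : ℝ) : ℝ := p ^ α + (1 - p) ^ α

/-- Inverse of `k_α^H`, mapping `I_α^H` back to `[0,1/2]`. -/
def kHInv (α : ℝ) : ℝ → ℝ := Function.invFunOn (kH α) (Set.Icc 0 (1/2))

/-- `δ_α^H = 2^{1-α}`. -/
def deltaH (α : ℝ) : ℝ := (2 : ℝ) ^ (1 - α)

/-- The closed interval `I_α^H` with endpoints `1` and `δ_α^H`. -/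
def IH (α : ℝ) : Set ℝ := Set.uIcc 1 (deltaH α)

/-- `κ_α^H(x,y) = k_α^H((k_α^H)⁻¹(x) ∗ (k_α^H)⁻¹(y))`. -/
def kkH (α x y : ℝ) : ℝ := kH α (bconv (kHInv α x) (kHInv α y))

/-- `ĥ_α(x,y) = h_α(h_α⁻¹(x) ∗ h_α⁻¹(y))`. -/
def hhat (α x y : ℝ) : ℝ := binH α (bconv (binHInv α x) (binHInv α y))

/-- Marginal on `Y` of a joint pmf. -/
def margY {X Y : Type*} [Fintype X] (p : X → Y → ℝ) (y : Y) : ℝ := ∑ x, p x y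

/-- A joint pmf: nonnegative entries summing to one. -/
def IsPmf {X Y : Type*} [Fintype X] [Fintype Y] (p : X → Y → ℝ) : Prop :=
  (∀ x y, 0 ≤ p x y) ∧ ∑ x, ∑ y, p x y = 1

/-- Arimoto conditional Rényi entropy `H_α^A(X|Y)`. -/
def condA (α : ℝ) {X Y : Type*} [Fintype X] [Fintype Y] (p : X → Y → ℝ) : ℝ :=
  (α / (1 - α)) * Real.log (∑ y, margY p y * (∑ x, (p x y / margY p y) ^ α) ^ (1/α))

/-- Hayashi conditional Rényi entropy `H_α^H(X|Y)`. -/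
def condH (α : ℝ) {X Y : Type*} [Fintype X] [Fintype Y] (p : X → Y → ℝ) : ℝ :=
  (1 / (1 - α)) * Real.log (∑ y, ∑ x, margY p y * (p x y / margY p y) ^ α)

/-- Jizba–Arimitsu conditional Rényi entropy `H_α^J(X|Y)`. -/
def condJ (α : ℝ) {X Y : Type*} [Fintype X] [Fintype Y] (p : X → Y → ℝ) : ℝ :=
  (1 / (1 - α)) * (Real.log (∑ x, ∑ y, p x y ^ α) - Real.log (∑ y, margY p y ^ α))

/-- Cachin conditional Rényi entropy `H_α^C(X|Y)`. -/
def condC (α : ℝ) {X Y : Type*} [Fintype X] [Fintype Y] (p : X → Y → ℝ) : ℝ :=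
  (1 / (1 - α)) * ∑ y, margY p y * Real.log (∑ x, (p x y / margY p y) ^ α)

/-- `K_α^A(X|Y) = exp(((1-α)/α)·H_α^A(X|Y))`. -/
def KA (α : ℝ) {X Y : Type*} [Fintype X] [Fintype Y] (p : X → Y → ℝ) : ℝ :=
  Real.exp (((1 - α)/α) * condA α p)

/-- `K_α^H(X|Y) = exp((1-α)·H_α^H(X|Y))`. -/
def KH (α : ℝ) {X Y : Type*} [Fintype X] [Fintype Y] (p : X → Y → ℝ) : ℝ :=
  Real.exp ((1 - α) * condH α p)

/-- `K_α^J(X|Y) = exp((1-α)·H_α^J(X|Y))`. -/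
def KJ (α : ℝ) {X Y : Type*} [Fintype X] [Fintype Y] (p : X → Y → ℝ) : ℝ :=
  Real.exp ((1 - α) * condJ α p)

/-- Joint pmf of `(X₁+X₂, (Y₁,Y₂))` for independent pairs `(X₁,Y₁)`, `(X₂,Y₂)`. -/
def combine {Y1 Y2 : Type*} (p1 : Bool → Y1 → ℝ) (p2 : Bool → Y2 → ℝ) :
    Bool → Y1 × Y2 → ℝ :=
  fun z y => ∑ x : Bool, p1 x y.1 * p2 (Bool.xor x z) y.2

/-- `k_∞^A(p) = max{p, 1-p}`. -/
def kInf (p : ℝ) : ℝ := max p (1 - p)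

/-- Binary min-entropy `h_∞(p) = -log max{p, 1-p}`. -/
def binHInf (p : ℝ) : ℝ := - Real.log (max p (1 - p))

/-- Inverse of the restriction of `h_∞` to `[0,1/2]`. -/
def binHInfInv : ℝ → ℝ := Function.invFunOn binHInf (Set.Icc 0 (1/2))

/-- Conditional min-entropy `H_∞(X|Y)` for binary `X`. -/
def condInf {Y : Type*} [Fintype Y] (p : Bool → Y → ℝ) : ℝ :=
  - Real.log (∑ y, margY p y * max (p false y / margY p y) (p true y / margY p y))

/-- Unconditional Rényi entropy of a finitely supported distribution. -/
def renyiEnt (α : ℝ) {X : Type*} [Fintype X] (p : X → ℝ) : ℝ :=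
  (1 / (1 - α)) * Real.log (∑ x, p x ^ α)

/-- Distribution of the mod-2 sum of two independent binary random variables. -/
def sumDist (p1 p2 : Bool → ℝ) : Bool → ℝ := fun z => ∑ x : Bool, p1 x * p2 (Bool.xor x z)

open Set

section Jensen

variable {𝕜 E F β ι κ : Type*} [Field 𝕜] [LinearOrder 𝕜] [IsStrictOrderedRing 𝕜]
  [AddCommGroup E] [AddCommGroup F] [AddCommGroup β] [PartialOrder β] [IsOrderedAddMonoid β]
  [Module 𝕜 E] [Module 𝕜 F] [Module 𝕜 β] [IsStrictOrderedModule 𝕜 β]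
  {s : Set E} {t : Set F} {f : E → F → β} {u : Finset ι} {v : Finset κ}
  {w : ι → 𝕜} {w' : κ → 𝕜} {p : ι → E} {q : κ → F}

theorem map_sum_sum_le_of_convexOn (hf₁ : ∀ y ∈ t, ConvexOn 𝕜 s (f · y))
    (hf₂ : ∀ x ∈ s, ConvexOn 𝕜 t (f x)) (hw₀ : ∀ i ∈ u, 0 ≤ w i) (hw₁ : ∑ i ∈ u, w i = 1)
    (hw₀' : ∀ j ∈ v, 0 ≤ w' j) (hw₁' : ∑ j ∈ v, w' j = 1) (hp : ∀ i ∈ u, p i ∈ s)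
    (hq : ∀ j ∈ v, q j ∈ t) :
    f (∑ i ∈ u, w i • p i) (∑ j ∈ v, w' j • q j) ≤
      ∑ i ∈ u, w i • ∑ j ∈ v, w' j • f (p i) (q j) := by
  obtain ⟨i₀, hi₀⟩ := Finset.nonempty_of_sum_ne_zero (hw₁.symm ▸ one_ne_zero)
  have hQ : ∑ j ∈ v, w' j • q j ∈ t := (hf₂ _ (hp i₀ hi₀)).1.sum_mem hw₀' hw₁' hq
  calc f (∑ i ∈ u, w i • p i) (∑ j ∈ v, w' j • q j)
      ≤ ∑ i ∈ u, w i • f (p i) (∑ j ∈ v, w' j • q j) := (hf₁ _ hQ).map_sum_le hw₀ hw₁ hp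
    _ ≤ ∑ i ∈ u, w i • ∑ j ∈ v, w' j • f (p i) (q j) :=
      Finset.sum_le_sum fun i hi =>
        smul_le_smul_of_nonneg_left ((hf₂ _ (hp i hi)).map_sum_le hw₀' hw₁' hq) (hw₀ i hi)

theorem le_map_sum_sum_of_concaveOn (hf₁ : ∀ y ∈ t, ConcaveOn 𝕜 s (f · y))
    (hf₂ : ∀ x ∈ s, ConcaveOn 𝕜 t (f x)) (hw₀ : ∀ i ∈ u, 0 ≤ w i) (hw₁ : ∑ i ∈ u, w i = 1)
    (hw₀' : ∀ j ∈ v, 0 ≤ w' j) (hw₁' : ∑ j ∈ v, w' j = 1) (hp : ∀ i ∈ u, p i ∈ s)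
    (hq : ∀ j ∈ v, q j ∈ t) :
    ∑ i ∈ u, w i • ∑ j ∈ v, w' j • f (p i) (q j) ≤
      f (∑ i ∈ u, w i • p i) (∑ j ∈ v, w' j • q j) :=
  map_sum_sum_le_of_convexOn (β := βᵒᵈ) hf₁ hf₂ hw₀ hw₁ hw₀' hw₁' hp hq

end Jensen

lemma bconv_comm (a b : ℝ) : bconv a b = bconv b a := by unfold bconv; ring

lemma bconv_one_sub_left (a b : ℝ) : bconv (1 - a) b = 1 - bconv a b := by unfold bconv; ring

lemma bconv_mem_Icc {a b : ℝ} (ha : a ∈ Icc (0:ℝ) 1) (hb : b ∈ Icc (0:ℝ) 1) :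
    bconv a b ∈ Icc (0:ℝ) 1 := by
  obtain ⟨ha₀, ha₁⟩ := ha
  obtain ⟨hb₀, hb₁⟩ := hb
  constructor <;> unfold bconv <;> nlinarith

lemma pos_of_mem_IH {α x : ℝ} (hx : x ∈ IH α) : 0 < x := by
  have hδ : 0 < deltaH α := rpow_pos_of_pos two_pos _
  rcases mem_uIcc.1 hx with h | h <;> linarith [h.1]

section kH

variable {α : ℝ}

lemma kH_one_sub (p : ℝ) : kH α (1 - p) = kH α p := by
  rw [kH, kH, sub_sub_cancel, add_comm]

lemma kH_zero (hα : 0 < α) : kH α 0 = 1 := by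
  simp [kH, zero_rpow hα.ne']

lemma kH_half : kH α (1 / 2) = deltaH α := by
  rw [kH, deltaH, show (1:ℝ) - 1 / 2 = 2⁻¹ by norm_num, one_div, inv_rpow zero_le_two,
    ← rpow_neg zero_le_two, rpow_sub two_pos, rpow_one, div_eq_mul_inv, ← rpow_neg zero_le_two]
  exact (two_mul _).symm

lemma continuous_kH (hα : 0 < α) : Continuous (kH α) := by
  have hpow : Continuous fun p : ℝ => p ^ α := continuous_id.rpow_const fun _ => Or.inr hα.le
  exact hpow.add (hpow.comp (continuous_const.sub continuous_id))

lemma hasDerivAt_kH {p : ℝ} (hp₀ : 0 < p) (hp₁ : p < 1) :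
    HasDerivAt (kH α) (α * p ^ (α - 1) - α * (1 - p) ^ (α - 1)) p := by
  have hleft := hasDerivAt_rpow_const (p := α) (Or.inl hp₀.ne')
  have hright := (hasDerivAt_rpow_const (x := 1 - p) (p := α) (Or.inl (by linarith))).comp p
    ((hasDerivAt_id p).const_sub 1)
  exact (hleft.add hright).congr_deriv (by ring)

lemma kH_strictMonoOn (hα : 0 < α) (hα1 : α < 1) : StrictMonoOn (kH α) (Icc 0 (1 / 2)) := by
  refine strictMonoOn_of_deriv_pos (convex_Icc _ _) (continuous_kH hα).continuousOn ?_
  intro p hp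
  rw [interior_Icc] at hp
  rw [(hasDerivAt_kH hp.1 (by linarith [hp.2])).deriv]
  have : (1 - p) ^ (α - 1) < p ^ (α - 1) :=
    rpow_lt_rpow_of_neg hp.1 (by linarith [hp.2]) (by linarith)
  nlinarith

lemma kH_strictAntiOn (hα1 : 1 < α) : StrictAntiOn (kH α) (Icc 0 (1 / 2)) := by
  refine strictAntiOn_of_deriv_neg (convex_Icc _ _) (continuous_kH (by linarith)).continuousOn ?_
  intro p hp
  rw [interior_Icc] at hp
  rw [(hasDerivAt_kH hp.1 (by linarith [hp.2])).deriv]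
  have : p ^ (α - 1) < (1 - p) ^ (α - 1) :=
    rpow_lt_rpow hp.1.le (by linarith [hp.2]) (by linarith)
  nlinarith

lemma kH_injOn (hα : 0 < α) (hα1 : α ≠ 1) : InjOn (kH α) (Icc 0 (1 / 2)) := by
  rcases hα1.lt_or_gt with h | h
  · exact (kH_strictMonoOn hα h).injOn
  · exact (kH_strictAntiOn h).injOn

lemma mapsTo_kH_Icc_half (hα : 0 < α) (hα1 : α ≠ 1) : MapsTo (kH α) (Icc 0 (1 / 2)) (IH α) := by
  rw [mapsTo_iff_image_subset]
  rcases hα1.lt_or_gt with h | h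
  · have himage := (kH_strictMonoOn hα h).monotoneOn.image_Icc_subset
    rw [kH_zero hα, kH_half] at himage
    exact himage.trans Icc_subset_uIcc
  · have himage := (kH_strictAntiOn h).antitoneOn.image_Icc_subset
    rw [kH_zero hα, kH_half] at himage
    exact himage.trans Icc_subset_uIcc'

lemma kH_mem_IH (hα : 0 < α) (hα1 : α ≠ 1) {p : ℝ} (hp : p ∈ Icc (0:ℝ) 1) : kH α p ∈ IH α := by
  rcases le_total p (1 / 2) with h | h
  · exact mapsTo_kH_Icc_half hα hα1 ⟨hp.1, h⟩
  · rw [← kH_one_sub]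
    exact mapsTo_kH_Icc_half hα hα1 ⟨by linarith [hp.2], by linarith⟩

lemma surjOn_kH (hα : 0 < α) : SurjOn (kH α) (Icc 0 (1 / 2)) (IH α) := by
  have h := intermediate_value_uIcc (a := (0:ℝ)) (b := 1 / 2) (continuous_kH hα).continuousOn
  rwa [kH_zero hα, kH_half, uIcc_of_le (show (0:ℝ) ≤ 1 / 2 by norm_num)] at h

lemma kHInv_mem (hα : 0 < α) {x : ℝ} (hx : x ∈ IH α) : kHInv α x ∈ Icc (0:ℝ) (1 / 2) :=
  (surjOn_kH hα).mapsTo_invFunOn hx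

lemma kH_kHInv (hα : 0 < α) {x : ℝ} (hx : x ∈ IH α) : kH α (kHInv α x) = x :=
  (surjOn_kH hα).rightInvOn_invFunOn hx

lemma kHInv_kH (hα : 0 < α) (hα1 : α ≠ 1) {p : ℝ} (hp : p ∈ Icc (0:ℝ) (1 / 2)) :
    kHInv α (kH α p) = p :=
  (kH_injOn hα hα1).leftInvOn_invFunOn hp

lemma kHInv_kH_eq_or (hα : 0 < α) (hα1 : α ≠ 1) {p : ℝ} (hp : p ∈ Icc (0:ℝ) 1) :
    kHInv α (kH α p) = p ∨ kHInv α (kH α p) = 1 - p := by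
  rcases le_total p (1 / 2) with h | h
  · exact Or.inl (kHInv_kH hα hα1 ⟨hp.1, h⟩)
  · rw [← kH_one_sub]
    exact Or.inr (kHInv_kH hα hα1 ⟨by linarith [hp.2], by linarith⟩)

lemma kH_bconv_kHInv_kH_left (hα : 0 < α) (hα1 : α ≠ 1) {a : ℝ} (ha : a ∈ Icc (0:ℝ) 1)
    (b : ℝ) : kH α (bconv (kHInv α (kH α a)) b) = kH α (bconv a b) := by
  rcases kHInv_kH_eq_or hα hα1 ha with h | h <;> rw [h]
  rw [bconv_one_sub_left, kH_one_sub]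

lemma kkH_kH_kH (hα : 0 < α) (hα1 : α ≠ 1) {a b : ℝ} (ha : a ∈ Icc (0:ℝ) 1)
    (hb : b ∈ Icc (0:ℝ) 1) : kkH α (kH α a) (kH α b) = kH α (bconv a b) := by
  rw [kkH, kH_bconv_kHInv_kH_left hα hα1 ha, bconv_comm, kH_bconv_kHInv_kH_left hα hα1 hb,
    bconv_comm]

lemma kkH_mem_IH (hα : 0 < α) (hα1 : α ≠ 1) {x y : ℝ} (hx : x ∈ IH α) (hy : y ∈ IH α) :
    kkH α x y ∈ IH α := by
  have hIcc : Icc (0:ℝ) (1 / 2) ⊆ Icc 0 1 := Icc_subset_Icc_right (by norm_num)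
  exact kH_mem_IH hα hα1
    (bconv_mem_Icc (hIcc (kHInv_mem hα hx)) (hIcc (kHInv_mem hα hy)))

lemma binH_injOn (hα : 0 < α) (hα1 : α ≠ 1) : InjOn (binH α) (Icc 0 (1 / 2)) := by
  intro a ha b hb hab
  have hc : 1 / (1 - α) ≠ 0 := one_div_ne_zero (sub_ne_zero.2 hα1.symm)
  exact kH_injOn hα hα1 ha hb <| log_injOn_pos
    (pos_of_mem_IH (mapsTo_kH_Icc_half hα hα1 ha)) (pos_of_mem_IH (mapsTo_kH_Icc_half hα hα1 hb))
    (mul_left_cancel₀ hc hab)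

lemma binHInv_eq_kHInv (hα : 0 < α) (hα1 : α ≠ 1) {x : ℝ} (hx : x ∈ IH α) :
    binHInv α (1 / (1 - α) * log x) = kHInv α x := by
  obtain ⟨p, hp, rfl⟩ := surjOn_kH hα hx
  rw [kHInv_kH hα hα1 hp]
  exact (binH_injOn hα hα1).leftInvOn_invFunOn hp

end kH

lemma sum_rpow_pos {ι : Type*} [Fintype ι] {f : ι → ℝ} (hf : ∀ i, 0 ≤ f i)
    (hsum : 0 < ∑ i, f i) (α : ℝ) : 0 < ∑ i, f i ^ α := by
  obtain ⟨i, -, hi⟩ := (Finset.sum_pos_iff_of_nonneg fun i _ => hf i).1 hsum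
  exact Finset.sum_pos' (fun j _ => rpow_nonneg (hf j) α) ⟨i, Finset.mem_univ i, rpow_pos_of_pos hi α⟩

lemma rpow_add_rpow_eq_mul_kH {m c : ℝ} (hm : 0 ≤ m) (hc : c ∈ Icc (0:ℝ) 1) (α : ℝ) :
    (m * c) ^ α + (m * (1 - c)) ^ α = m ^ α * kH α c := by
  rw [mul_rpow hm hc.1, mul_rpow hm (sub_nonneg.2 hc.2), kH, mul_add]

lemma condJ_eq_log_KJ {α : ℝ} (hα1 : α ≠ 1) {X Y : Type*} [Fintype X] [Fintype Y]
    (p : X → Y → ℝ) : condJ α p = 1 / (1 - α) * log (KJ α p) := by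
  have h : 1 - α ≠ 0 := sub_ne_zero.2 hα1.symm
  rw [KJ, log_exp, ← mul_assoc, one_div_mul_cancel h, one_mul]

def escort (α : ℝ) {X Y : Type*} [Fintype X] [Fintype Y] (p : X → Y → ℝ) (y : Y) : ℝ :=
  margY p y ^ α / ∑ y', margY p y' ^ α

/-- `P(X = 0 | Y = y)`, with the junk value `0` when `P(Y = y) = 0`. -/
def condProb {Y : Type*} (p : Bool → Y → ℝ) (y : Y) : ℝ := p false y / margY p y

lemma margY_bool {Y : Type*} (p : Bool → Y → ℝ) (y : Y) : margY p y = p false y + p true y := by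
  simp only [margY, Fintype.sum_bool]
  ring

namespace IsPmf

section General

variable {X Y : Type*} [Fintype X] [Fintype Y] {p : X → Y → ℝ}

lemma margY_nonneg (hp : IsPmf p) (y : Y) : 0 ≤ margY p y :=
  Finset.sum_nonneg fun x _ => hp.1 x y

lemma sum_margY (hp : IsPmf p) : ∑ y, margY p y = 1 := by
  rw [← hp.2, Finset.sum_comm]
  rfl

lemma sum_margY_rpow_pos (hp : IsPmf p) (α : ℝ) : 0 < ∑ y, margY p y ^ α :=
  sum_rpow_pos hp.margY_nonneg (hp.sum_margY ▸ one_pos) α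

lemma sum_sum_rpow_pos (hp : IsPmf p) (α : ℝ) : 0 < ∑ x, ∑ y, p x y ^ α := by
  rw [← Fintype.sum_prod_type']
  exact sum_rpow_pos (fun xy : X × Y => hp.1 xy.1 xy.2) (by rw [Fintype.sum_prod_type', hp.2]; exact one_pos) α

lemma escort_nonneg (hp : IsPmf p) (α : ℝ) (y : Y) : 0 ≤ escort α p y :=
  div_nonneg (rpow_nonneg (hp.margY_nonneg y) α) (hp.sum_margY_rpow_pos α).le

lemma sum_escort (hp : IsPmf p) (α : ℝ) : ∑ y, escort α p y = 1 := by
  unfold escort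
  rw [← Finset.sum_div, div_self (hp.sum_margY_rpow_pos α).ne']

lemma KJ_eq_div {α : ℝ} (hα1 : α ≠ 1) (hp : IsPmf p) :
    KJ α p = (∑ x, ∑ y, p x y ^ α) / ∑ y, margY p y ^ α := by
  have h : 1 - α ≠ 0 := sub_ne_zero.2 hα1.symm
  rw [KJ, condJ, ← mul_assoc, mul_one_div_cancel h, one_mul, exp_sub,
    exp_log (hp.sum_sum_rpow_pos α), exp_log (hp.sum_margY_rpow_pos α)]

end General

section Binary

variable {Y : Type*} [Fintype Y] {p : Bool → Y → ℝ}

lemma margY_mul_condProb (hp : IsPmf p) (y : Y) : margY p y * condProb p y = p false y := by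
  rcases (hp.margY_nonneg y).eq_or_lt with h | h
  · rw [← h, zero_mul]
    linarith [margY_bool p y, hp.1 false y, hp.1 true y]
  · exact mul_div_cancel₀ _ h.ne'

lemma margY_mul_one_sub_condProb (hp : IsPmf p) (y : Y) :
    margY p y * (1 - condProb p y) = p true y := by
  rw [mul_one_sub, hp.margY_mul_condProb, margY_bool]
  ring

lemma condProb_mem (hp : IsPmf p) (y : Y) : condProb p y ∈ Icc (0:ℝ) 1 :=
  ⟨div_nonneg (hp.1 false y) (hp.margY_nonneg y),
    div_le_one_of_le₀ (by linarith [margY_bool p y, hp.1 true y]) (hp.margY_nonneg y)⟩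

lemma sum_rpow_eq (hp : IsPmf p) (α : ℝ) (y : Y) :
    ∑ x, p x y ^ α = margY p y ^ α * kH α (condProb p y) := by
  rw [Fintype.sum_bool, ← hp.margY_mul_condProb, ← hp.margY_mul_one_sub_condProb, add_comm,
    rpow_add_rpow_eq_mul_kH (hp.margY_nonneg y) (hp.condProb_mem y)]

lemma KJ_eq_sum {α : ℝ} (hα1 : α ≠ 1) (hp : IsPmf p) :
    KJ α p = ∑ y, escort α p y * kH α (condProb p y) := by
  rw [hp.KJ_eq_div hα1, Finset.sum_comm, Finset.sum_div]
  refine Finset.sum_congr rfl fun y _ => ?_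
  rw [hp.sum_rpow_eq, escort, div_mul_eq_mul_div]

lemma KJ_mem_IH {α : ℝ} (hα : 0 < α) (hα1 : α ≠ 1) (hp : IsPmf p) : KJ α p ∈ IH α := by
  rw [hp.KJ_eq_sum hα1, IH]
  simpa only [smul_eq_mul] using (convex_uIcc _ _).sum_mem (fun y _ => hp.escort_nonneg α y)
    (hp.sum_escort α) fun y _ => kH_mem_IH hα hα1 (hp.condProb_mem y)

end Binary

end IsPmf

lemma margY_combine {Y1 Y2 : Type*} (p1 : Bool → Y1 → ℝ) (p2 : Bool → Y2 → ℝ) (y : Y1 × Y2) :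
    margY (combine p1 p2) y = margY p1 y.1 * margY p2 y.2 := by
  simp only [margY, combine, Fintype.sum_bool, Bool.xor_false, Bool.xor_true, Bool.not_false,
    Bool.not_true]
  ring

section Combine

variable {Y1 Y2 : Type*} [Fintype Y1] [Fintype Y2] {p1 : Bool → Y1 → ℝ} {p2 : Bool → Y2 → ℝ}

lemma isPmf_combine (hp1 : IsPmf p1) (hp2 : IsPmf p2) : IsPmf (combine p1 p2) := by
  refine ⟨fun z y => Finset.sum_nonneg fun x _ => mul_nonneg (hp1.1 _ _) (hp2.1 _ _), ?_⟩
  rw [Finset.sum_comm]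
  change ∑ y, margY (combine p1 p2) y = 1
  simp only [margY_combine, Fintype.sum_prod_type, ← Finset.sum_mul_sum, hp1.sum_margY,
    hp2.sum_margY, one_mul]

lemma combine_false_eq (hp1 : IsPmf p1) (hp2 : IsPmf p2) (y1 : Y1) (y2 : Y2) :
    combine p1 p2 false (y1, y2) =
      margY p1 y1 * margY p2 y2 * (1 - bconv (condProb p1 y1) (condProb p2 y2)) := by
  simp only [combine, Fintype.sum_bool, Bool.xor_false]
  rw [← hp1.margY_mul_condProb, ← hp1.margY_mul_one_sub_condProb, ← hp2.margY_mul_condProb,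
    ← hp2.margY_mul_one_sub_condProb, bconv]
  ring

lemma combine_true_eq (hp1 : IsPmf p1) (hp2 : IsPmf p2) (y1 : Y1) (y2 : Y2) :
    combine p1 p2 true (y1, y2) =
      margY p1 y1 * margY p2 y2 * bconv (condProb p1 y1) (condProb p2 y2) := by
  simp only [combine, Fintype.sum_bool, Bool.xor_true, Bool.not_false, Bool.not_true]
  rw [← hp1.margY_mul_condProb, ← hp1.margY_mul_one_sub_condProb, ← hp2.margY_mul_condProb,
    ← hp2.margY_mul_one_sub_condProb, bconv]
  ring

lemma sum_rpow_combine (hp1 : IsPmf p1) (hp2 : IsPmf p2) (α : ℝ) (y1 : Y1) (y2 : Y2) :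
    ∑ z, combine p1 p2 z (y1, y2) ^ α =
      margY p1 y1 ^ α * margY p2 y2 ^ α * kH α (bconv (condProb p1 y1) (condProb p2 y2)) := by
  have hm := mul_nonneg (hp1.margY_nonneg y1) (hp2.margY_nonneg y2)
  rw [Fintype.sum_bool, combine_true_eq hp1 hp2, combine_false_eq hp1 hp2,
    rpow_add_rpow_eq_mul_kH hm (bconv_mem_Icc (hp1.condProb_mem y1) (hp2.condProb_mem y2)),
    mul_rpow (hp1.margY_nonneg y1) (hp2.margY_nonneg y2)]

lemma KJ_combine {α : ℝ} (hα : 0 < α) (hα1 : α ≠ 1) (hp1 : IsPmf p1) (hp2 : IsPmf p2) :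
    KJ α (combine p1 p2) = ∑ y1, escort α p1 y1 * ∑ y2, escort α p2 y2 *
      kkH α (kH α (condProb p1 y1)) (kH α (condProb p2 y2)) := by
  have hM : ∑ y, margY (combine p1 p2) y ^ α =
      (∑ y1, margY p1 y1 ^ α) * ∑ y2, margY p2 y2 ^ α := by
    simp only [Fintype.sum_prod_type, Finset.sum_mul_sum, margY_combine]
    exact Finset.sum_congr rfl fun y1 _ => Finset.sum_congr rfl fun y2 _ =>
      mul_rpow (hp1.margY_nonneg y1) (hp2.margY_nonneg y2)
  rw [(isPmf_combine hp1 hp2).KJ_eq_div hα1, hM, Finset.sum_comm, Fintype.sum_prod_type,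
    Finset.sum_div]
  refine Finset.sum_congr rfl fun y1 _ => ?_
  rw [Finset.sum_div, Finset.mul_sum _ _ (escort α p1 y1)]
  refine Finset.sum_congr rfl fun y2 _ => ?_
  rw [sum_rpow_combine hp1 hp2, kkH_kH_kH hα hα1 (hp1.condProb_mem y1) (hp2.condProb_mem y2),
    escort, escort]
  ring

lemma kkH_KJ_le_KJ_combine {α : ℝ} (hα : 0 < α) (hα1 : α ≠ 1)
    (hconvex₁ : ∀ y ∈ IH α, ConvexOn ℝ (IH α) fun x => kkH α x y)
    (hconvex₂ : ∀ x ∈ IH α, ConvexOn ℝ (IH α) fun y => kkH α x y)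
    (hp1 : IsPmf p1) (hp2 : IsPmf p2) :
    kkH α (KJ α p1) (KJ α p2) ≤ KJ α (combine p1 p2) := by
  rw [KJ_combine hα hα1 hp1 hp2, hp1.KJ_eq_sum hα1, hp2.KJ_eq_sum hα1]
  simpa only [smul_eq_mul] using map_sum_sum_le_of_convexOn hconvex₁ hconvex₂
    (fun y _ => hp1.escort_nonneg α y) (hp1.sum_escort α) (fun y _ => hp2.escort_nonneg α y)
    (hp2.sum_escort α) (fun y _ => kH_mem_IH hα hα1 (hp1.condProb_mem y))
    (fun y _ => kH_mem_IH hα hα1 (hp2.condProb_mem y))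

lemma KJ_combine_le_kkH_KJ {α : ℝ} (hα : 0 < α) (hα1 : α ≠ 1)
    (hconcave₁ : ∀ y ∈ IH α, ConcaveOn ℝ (IH α) fun x => kkH α x y)
    (hconcave₂ : ∀ x ∈ IH α, ConcaveOn ℝ (IH α) fun y => kkH α x y)
    (hp1 : IsPmf p1) (hp2 : IsPmf p2) :
    KJ α (combine p1 p2) ≤ kkH α (KJ α p1) (KJ α p2) := by
  rw [KJ_combine hα hα1 hp1 hp2, hp1.KJ_eq_sum hα1, hp2.KJ_eq_sum hα1]
  simpa only [smul_eq_mul] using le_map_sum_sum_of_concaveOn hconcave₁ hconcave₂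
    (fun y _ => hp1.escort_nonneg α y) (hp1.sum_escort α) (fun y _ => hp2.escort_nonneg α y)
    (hp2.sum_escort α) (fun y _ => kH_mem_IH hα hα1 (hp1.condProb_mem y))
    (fun y _ => kH_mem_IH hα hα1 (hp2.condProb_mem y))

lemma binH_bconv_binHInv_condJ {α : ℝ} (hα : 0 < α) (hα1 : α ≠ 1) (hp1 : IsPmf p1)
    (hp2 : IsPmf p2) :
    binH α (bconv (binHInv α (condJ α p1)) (binHInv α (condJ α p2))) =
      1 / (1 - α) * log (kkH α (KJ α p1) (KJ α p2)) := by
  rw [condJ_eq_log_KJ hα1, condJ_eq_log_KJ hα1, binHInv_eq_kHInv hα hα1 (hp1.KJ_mem_IH hα hα1),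
    binHInv_eq_kHInv hα hα1 (hp2.KJ_mem_IH hα hα1)]
  rfl

end Combine

lemma one_div_one_sub_mul_log_le_of_lt_one {α a b : ℝ} (hα : α < 1) (ha : 0 < a) (hab : a ≤ b) :
    1 / (1 - α) * log a ≤ 1 / (1 - α) * log b :=
  mul_le_mul_of_nonneg_left (log_le_log ha hab) (one_div_nonneg.2 (sub_nonneg.2 hα.le))

lemma one_div_one_sub_mul_log_le_of_one_lt {α a b : ℝ} (hα : 1 < α) (ha : 0 < a) (hab : a ≤ b) :
    1 / (1 - α) * log b ≤ 1 / (1 - α) * log a :=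
  mul_le_mul_of_nonpos_left (log_le_log ha hab) (one_div_nonpos.2 (sub_nonpos.2 hα.le))

/-- BSC-bound for the Jizba–Arimitsu conditional Rényi entropy,
under convexity/concavity of `κ_α^H`. -/
theorem stmt_11 (α : ℝ) (hα : 0 < α) (hα1 : α ≠ 1)
    {Y1 Y2 : Type*} [Fintype Y1] [Fintype Y2]
    (p1 : Bool → Y1 → ℝ) (p2 : Bool → Y2 → ℝ)
    (hp1 : IsPmf p1) (hp2 : IsPmf p2) :
    (((∀ y ∈ IH α, ConvexOn ℝ (IH α) (fun x => kkH α x y)) ∧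
      (∀ x ∈ IH α, ConvexOn ℝ (IH α) (fun y => kkH α x y))) →
      (1 < α → condJ α (combine p1 p2) ≤
          binH α (bconv (binHInv α (condJ α p1)) (binHInv α (condJ α p2)))) ∧
      (α < 1 → binH α (bconv (binHInv α (condJ α p1)) (binHInv α (condJ α p2))) ≤
          condJ α (combine p1 p2))) ∧
    (((∀ y ∈ IH α, ConcaveOn ℝ (IH α) (fun x => kkH α x y)) ∧
      (∀ x ∈ IH α, ConcaveOn ℝ (IH α) (fun y => kkH α x y))) →
      (1 < α → binH α (bconv (binHInv α (condJ α p1)) (binHInv α (condJ α p2))) ≤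
          condJ α (combine p1 p2)) ∧
      (α < 1 → condJ α (combine p1 p2) ≤
          binH α (bconv (binHInv α (condJ α p1)) (binHInv α (condJ α p2))))) := by
  rw [binH_bconv_binHInv_condJ hα hα1 hp1 hp2, condJ_eq_log_KJ hα1 (combine p1 p2)]
  have hkkH_pos : 0 < kkH α (KJ α p1) (KJ α p2) :=
    pos_of_mem_IH (kkH_mem_IH hα hα1 (hp1.KJ_mem_IH hα hα1) (hp2.KJ_mem_IH hα hα1))
  have hKJ_pos : 0 < KJ α (combine p1 p2) :=
    pos_of_mem_IH ((isPmf_combine hp1 hp2).KJ_mem_IH hα hα1)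
  refine ⟨fun ⟨hconvex₁, hconvex₂⟩ => ?_, fun ⟨hconcave₁, hconcave₂⟩ => ?_⟩
  · have hle := kkH_KJ_le_KJ_combine hα hα1 hconvex₁ hconvex₂ hp1 hp2
    exact ⟨fun h => one_div_one_sub_mul_log_le_of_one_lt h hkkH_pos hle,
      fun h => one_div_one_sub_mul_log_le_of_lt_one h hkkH_pos hle⟩
  · have hle := KJ_combine_le_kkH_KJ hα hα1 hconcave₁ hconcave₂ hp1 hp2
    exact ⟨fun h => one_div_one_sub_mul_log_le_of_one_lt h hKJ_pos hle,
      fun h => one_div_one_sub_mul_log_le_of_lt_one h hKJ_pos hle⟩
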